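/- Lorenz curve criterion for survival of the strongest-first society: Let X be a nonnegative random variable with continuous, strictly increasing cumulative distribution function F satisfying F(0) = 0, finite mean μ > 0, and let m > 1 and 0 < r ≤ m·μ. Let θ ≥ 0 satisfy m∫_θ^∞ x dF(x) = r. Then m·[1 − F(θ)] > 1 if and only if LC(1 − 1/m) > 1 − r/(m·μ). -/

import Mathlib

/-!
The quantile function `Q` of the continuous distribution function `F` transports Lebesgue
measure on `(0, F θ]` to the law of `X` on `[0, θ]`: for `s ≥ 0` both `{t ∈ (0, F θ] | s < Q t}`
and `{s < X ≤ θ}` have measure `(F θ - F s)⁺`. By the layer-cake formula the lower partial mean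
`E[X; X ≤ θ] = μ - r / m` therefore equals `μ · LC(F θ)`. As `Q > 0` on `(0, 1)`, the Lorenz curve
is strictly increasing there, so `LC(1 - 1/m) > LC(F θ)` exactly when `1 - 1/m > F θ`, that is,
when `m (1 - F θ) > 1`.
-/

open MeasureTheory Filter Set

noncomputable section

/-- Quantile function (generalized inverse) `F⁻¹(t) = inf {x ≥ 0 : F(x) ≥ t}`. -/
def quantile (F : ℝ → ℝ) (t : ℝ) : ℝ := sInf {x | 0 ≤ x ∧ t ≤ F x}

/-- Lorenz curve `LC(p) = (1/μ) ∫₀^p F⁻¹(t) dt` of a distribution function `F`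
with mean `μ`. -/
def lorenz (F : ℝ → ℝ) (μ : ℝ) (p : ℝ) : ℝ := (1 / μ) * ∫ t in (0:ℝ)..p, quantile F t

open ProbabilityTheory

section Quantile

variable {F : ℝ → ℝ}

lemma quantile_nonneg (t : ℝ) : 0 ≤ quantile F t :=
  Real.sInf_nonneg fun _ hx => hx.1

lemma quantile_le {t s : ℝ} (hs : 0 ≤ s) (hts : t ≤ F s) : quantile F t ≤ s :=
  csInf_le ⟨0, fun _ hx => hx.1⟩ ⟨hs, hts⟩

lemma le_apply_quantile (hcont : Continuous F) {t b : ℝ} (hb : 0 ≤ b) (htb : t ≤ F b) :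
    t ≤ F (quantile F t) :=
  have hclosed : IsClosed {x | 0 ≤ x ∧ t ≤ F x} :=
    (isClosed_le continuous_const continuous_id).inter (isClosed_le continuous_const hcont)
  (hclosed.csInf_mem ⟨b, hb, htb⟩ ⟨0, fun _ hx => hx.1⟩).2

lemma lt_quantile_iff (hmono : Monotone F) (hcont : Continuous F) {t b s : ℝ} (hb : 0 ≤ b)
    (htb : t ≤ F b) (hs : 0 ≤ s) : s < quantile F t ↔ F s < t := by
  constructor
  · exact fun h => lt_of_not_ge fun hts => (quantile_le hs hts).not_gt h
  · exact fun h => lt_of_not_ge fun hqs =>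
      ((le_apply_quantile hcont hb htb).trans (hmono hqs)).not_gt h

lemma quantile_pos (hmono : Monotone F) (hcont : Continuous F) (hF0 : F 0 = 0) {t b : ℝ}
    (ht : 0 < t) (hb : 0 ≤ b) (htb : t ≤ F b) : 0 < quantile F t :=
  (lt_quantile_iff hmono hcont hb htb le_rfl).mpr (by rwa [hF0])

lemma quantile_monotoneOn {b : ℝ} (hb : 0 ≤ b) : MonotoneOn (quantile F) (Iic (F b)) :=
  fun _ _ _ ht' htt' => csInf_le_csInf ⟨0, fun _ hx => hx.1⟩ ⟨b, hb, ht'⟩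
    fun _ hx => ⟨hx.1, htt'.trans hx.2⟩

lemma intervalIntegrable_quantile {b u v : ℝ} (hb : 0 ≤ b) (hu : u ≤ F b) (hv : v ≤ F b) :
    IntervalIntegrable (quantile F) volume u v :=
  ((quantile_monotoneOn hb).mono fun _ hx => hx.2.trans (max_le hu hv)).intervalIntegrable

lemma lorenz_strictMonoOn (hmono : Monotone F) (hcont : Continuous F) (hF0 : F 0 = 0)
    {μ b : ℝ} (hμ : 0 < μ) (hb : 0 ≤ b) : StrictMonoOn (lorenz F μ) (Icc 0 (F b)) := by
  intro u hu v hv huv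
  have hsplit := intervalIntegral.integral_add_adjacent_intervals
    (intervalIntegrable_quantile (u := 0) hb (hF0 ▸ hmono hb) hu.2)
    (intervalIntegrable_quantile hb hu.2 hv.2)
  have hpos : 0 < ∫ t in u..v, quantile F t :=
    intervalIntegral.intervalIntegral_pos_of_pos_on (intervalIntegrable_quantile hb hu.2 hv.2)
      (fun t ht => quantile_pos hmono hcont hF0 (hu.1.trans_lt ht.1) hb (ht.2.le.trans hv.2)) huv
  unfold lorenz
  gcongr
  linarith

lemma measureReal_restrict_Ioc_setOf_lt_quantile (hmono : Monotone F) (hcont : Continuous F)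
    (hnonneg : ∀ x, 0 ≤ F x) {q b s : ℝ} (hb : 0 ≤ b) (hqb : q ≤ F b) (hs : 0 ≤ s) :
    (volume.restrict (Ioc 0 q)).real {t | s < quantile F t} = max (q - F s) 0 := by
  have hset : {t | s < quantile F t} ∩ Ioc 0 q = Ioc (F s) q := by
    ext t
    simp only [mem_inter_iff, mem_ofPred_eq, mem_Ioc]
    constructor
    · rintro ⟨hlt, -, htq⟩
      exact ⟨(lt_quantile_iff hmono hcont hb (htq.trans hqb) hs).mp hlt, htq⟩
    · rintro ⟨hst, htq⟩
      exact ⟨(lt_quantile_iff hmono hcont hb (htq.trans hqb) hs).mpr hst,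
        (hnonneg s).trans_lt hst, htq⟩
  rw [measureReal_def, Measure.restrict_apply' measurableSet_Ioc, hset, Real.volume_Ioc,
    ENNReal.toReal_ofReal']

lemma intervalIntegral_quantile_eq_integral_max (hmono : Monotone F) (hcont : Continuous F)
    (hnonneg : ∀ x, 0 ≤ F x) {q b : ℝ} (hq : 0 ≤ q) (hb : 0 ≤ b) (hqb : q ≤ F b) :
    ∫ t in (0:ℝ)..q, quantile F t = ∫ s in Ioi 0, max (q - F s) 0 := by
  have hint : IntegrableOn (quantile F) (Ioc 0 q) :=
    (intervalIntegrable_iff_integrableOn_Ioc_of_le hq).mp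
      (intervalIntegrable_quantile hb (hnonneg b) hqb)
  rw [intervalIntegral.integral_of_le hq,
    hint.integral_eq_integral_meas_lt (ae_of_all _ quantile_nonneg)]
  exact setIntegral_congr_fun measurableSet_Ioi fun s hs =>
    measureReal_restrict_Ioc_setOf_lt_quantile hmono hcont hnonneg hb hqb (le_of_lt hs)

end Quantile

section LayerCake

variable {Ω : Type*} [MeasurableSpace Ω] {P : Measure Ω} [IsProbabilityMeasure P] {X : Ω → ℝ}

lemma cdf_map_apply (hX : Measurable X) (x : ℝ) : cdf (P.map X) x = P.real {ω | X ω ≤ x} := by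
  have := Measure.isProbabilityMeasure_map (μ := P) hX.aemeasurable
  rw [cdf_eq_real, map_measureReal_apply hX measurableSet_Iic]
  rfl

lemma measureReal_restrict_le_setOf_lt (hX : Measurable X) (θ s : ℝ) :
    (P.restrict {ω | X ω ≤ θ}).real {ω | s < X ω} =
      max (cdf (P.map X) θ - cdf (P.map X) s) 0 := by
  have := Measure.isProbabilityMeasure_map (μ := P) hX.aemeasurable
  have hset : {ω | s < X ω} ∩ {ω | X ω ≤ θ} = X ⁻¹' Ioc s θ := rfl
  have hIoc : P.map X (Ioc s θ) = ENNReal.ofReal (cdf (P.map X) θ - cdf (P.map X) s) := by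
    rw [← (cdf (P.map X)).measure_Ioc, measure_cdf]
  rw [measureReal_def, Measure.restrict_apply' (measurableSet_le hX measurable_const), hset,
    ← Measure.map_apply hX measurableSet_Ioc, hIoc, ENNReal.toReal_ofReal']

lemma setIntegral_le_eq_integral_max (hX : Measurable X) (hXnonneg : ∀ ω, 0 ≤ X ω) (θ : ℝ) :
    ∫ ω in {ω | X ω ≤ θ}, X ω ∂P = ∫ s in Ioi 0, max (cdf (P.map X) θ - cdf (P.map X) s) 0 := by
  have hint : IntegrableOn X {ω | X ω ≤ θ} P :=
    Integrable.of_bound hX.aestronglyMeasurable θ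
      ((ae_restrict_mem (measurableSet_le hX measurable_const)).mono fun ω hω => by
        rw [Real.norm_of_nonneg (hXnonneg ω)]; exact hω)
  rw [hint.integral_eq_integral_meas_lt (ae_of_all _ hXnonneg)]
  exact setIntegral_congr_fun measurableSet_Ioi fun s _ => measureReal_restrict_le_setOf_lt hX θ s

theorem setIntegral_le_eq_intervalIntegral_quantile (hX : Measurable X) (hXnonneg : ∀ ω, 0 ≤ X ω)
    (hcont : Continuous (cdf (P.map X))) (θ : ℝ) :
    ∫ ω in {ω | X ω ≤ θ}, X ω ∂P = ∫ t in (0:ℝ)..cdf (P.map X) θ, quantile (cdf (P.map X)) t := by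
  rw [setIntegral_le_eq_integral_max hX hXnonneg, intervalIntegral_quantile_eq_integral_max
    (monotone_cdf _) hcont (cdf_nonneg _) (cdf_nonneg _ θ) (le_max_right θ 0)
    (monotone_cdf _ (le_max_left θ 0))]

end LayerCake

theorem lorenz_sfs_survival_criterion_general
    {Ω : Type*} [MeasurableSpace Ω] (P : Measure Ω) [IsProbabilityMeasure P]
    (X : Ω → ℝ) (hXmeas : Measurable X) (hXnonneg : ∀ ω, 0 ≤ X ω)
    (hXint : Integrable X P)
    (μ : ℝ) (hμ : μ = ∫ ω, X ω ∂P) (hμpos : 0 < μ)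
    (F : ℝ → ℝ) (hF : ∀ x, F x = (P {ω | X ω ≤ x}).toReal)
    (hFcont : Continuous F) (hF0 : F 0 = 0)
    (m r : ℝ) (hm : 1 < m)
    (θ : ℝ)
    (hθ : m * ∫ ω in {ω | θ < X ω}, X ω ∂P = r) :
    1 < m * (1 - F θ) ↔ 1 - r / (m * μ) < lorenz F μ (1 - 1 / m) := by
  obtain rfl : F = cdf (P.map X) := funext fun x => (hF x).trans (cdf_map_apply hXmeas x).symm
  have hm0 : 0 < m := zero_lt_one.trans hm
  have hp : 1 - 1 / m ∈ Ico 0 1 :=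
    ⟨sub_nonneg.mpr ((div_le_one hm0).mpr hm.le), sub_lt_self 1 (by positivity)⟩
  obtain ⟨b, hpb, hθb⟩ := (((tendsto_cdf_atTop (P.map X)).eventually
    (eventually_ge_nhds hp.2)).and (eventually_ge_atTop (max θ 0))).exists
  have hb : 0 ≤ b := (le_max_right θ 0).trans hθb
  have hlower : ∫ ω in {ω | X ω ≤ θ}, X ω ∂P = μ - r / m := by
    have := integral_add_compl (measurableSet_le hXmeas (measurable_const (a := θ))) hXint
    simp only [compl_ofPred, not_le] at this
    rw [hμ, ← this, ← hθ]
    field_simp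
    ring
  have hLC : 1 - r / (m * μ) = lorenz (cdf (P.map X)) μ (cdf (P.map X) θ) := by
    rw [lorenz, ← setIntegral_le_eq_intervalIntegral_quantile hXmeas hXnonneg hFcont, hlower]
    field_simp
  rw [hLC, (lorenz_strictMonoOn (monotone_cdf _) hFcont hF0 hμpos hb).lt_iff_lt
    ⟨cdf_nonneg _ θ, monotone_cdf _ ((le_max_left θ 0).trans hθb)⟩ ⟨hp.1, hpb⟩]
  rw [lt_sub_iff_add_lt, ← lt_sub_iff_add_lt']
  exact (div_lt_iff₀' hm0).symm

/-- **Lorenz curve criterion for survival of the strongest-first society.**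
If `X ≥ 0` has continuous, strictly increasing distribution function `F` with
`F(0) = 0` and finite mean `μ > 0`, `m > 1`, `0 < r ≤ m·μ`, and `θ ≥ 0`
satisfies `m ∫_θ^∞ x dF(x) = r`, then
`m·[1 − F(θ)] > 1 ↔ LC(1 − 1/m) > 1 − r/(m·μ)`. -/
theorem lorenz_sfs_survival_criterion
    {Ω : Type*} [MeasurableSpace Ω] (P : Measure Ω) [IsProbabilityMeasure P]
    (X : Ω → ℝ) (hXmeas : Measurable X) (hXnonneg : ∀ ω, 0 ≤ X ω)
    (hXint : Integrable X P)
    (μ : ℝ) (hμ : μ = ∫ ω, X ω ∂P) (hμpos : 0 < μ)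
    (F : ℝ → ℝ) (hF : ∀ x, F x = (P {ω | X ω ≤ x}).toReal)
    (hFcont : Continuous F) (hFmono : StrictMonoOn F (Ici 0)) (hF0 : F 0 = 0)
    (m r : ℝ) (hm : 1 < m) (hrpos : 0 < r) (hrm : r ≤ m * μ)
    (θ : ℝ) (hθnonneg : 0 ≤ θ)
    (hθ : m * ∫ ω in {ω | θ < X ω}, X ω ∂P = r) :
    1 < m * (1 - F θ) ↔ 1 - r / (m * μ) < lorenz F μ (1 - 1 / m) :=
  lorenz_sfs_survival_criterion_general P X hXmeas hXnonneg hXint μ hμ hμpos F hF hFcont hF0 m r hm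
    θ hθ

end
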